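/- Let 𝐇 be an entropy satisfying the normalization 𝐇(u^{(2)}) = 1, where u^{(2)} := I_2/2. Then 𝐇(u^{(d)}) = log₂ d for every d ≥ 1, where u^{(d)} := I_d/d is the uniform state of dimension d. -/

import Mathlib

open Matrix Kronecker BigOperators
open scoped ENNReal ComplexOrder

noncomputable section

/-- A quantum state: a positive semidefinite matrix of trace one. -/
def IsState {α : Type} [Fintype α] (ρ : Matrix α α ℂ) : Prop :=
  ρ.PosSemidef ∧ ρ.trace = 1

/-- The Choi matrix `∑ i j, E i j ⊗ N (E i j)` of a map between matrix algebras. -/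
def choiMatrix {α β : Type} [Fintype α] [DecidableEq α] [Fintype β]
    (N : Matrix α α ℂ → Matrix β β ℂ) : Matrix (α × β) (α × β) ℂ :=
  ∑ i : α, ∑ j : α, Matrix.single i j (1 : ℂ) ⊗ₖ N (Matrix.single i j 1)

/-- A quantum channel: a linear, trace-preserving and completely positive map. -/
def IsChannel {α β : Type} [Fintype α] [DecidableEq α] [Fintype β]
    (N : Matrix α α ℂ → Matrix β β ℂ) : Prop :=
  IsLinearMap ℂ N ∧ (∀ X, (N X).trace = X.trace) ∧ (choiMatrix N).PosSemidef

/-- Partial trace over the first tensor factor. -/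
def trA {α β : Type} [Fintype α] (ρ : Matrix (α × β) (α × β) ℂ) : Matrix β β ℂ :=
  Matrix.of fun j j' => ∑ i : α, ρ (i, j) (i, j')

/-- The uniform (maximally mixed) state of dimension `n`. -/
def unif (n : ℕ) : Matrix (Fin n) (Fin n) ℂ := (n : ℂ)⁻¹ • 1

/-- The tensor extension `M ⊗ id` of a map `M` acting on the first factor. -/
def tensorIdRight {a a' : ℕ} (b : ℕ)
    (M : Matrix (Fin a) (Fin a) ℂ → Matrix (Fin a') (Fin a') ℂ)
    (X : Matrix (Fin a × Fin b) (Fin a × Fin b) ℂ) :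
    Matrix (Fin a' × Fin b) (Fin a' × Fin b) ℂ :=
  Matrix.of fun p q => M (Matrix.of fun k k' => X (k, p.2) (k', q.2)) p.1 q.1

/-- A conditionally unital bipartite channel: it sends every state of the form
`u_A ⊗ ρ_B` to a state of the form `u_C ⊗ σ_{B'}`. -/
def CondUnital {a b c b' : ℕ}
    (N : Matrix (Fin a × Fin b) (Fin a × Fin b) ℂ → Matrix (Fin c × Fin b') (Fin c × Fin b') ℂ) :
    Prop :=
  ∀ ρB : Matrix (Fin b) (Fin b) ℂ, IsState ρB →
    ∃ σ : Matrix (Fin b') (Fin b') ℂ, IsState σ ∧ N (unif a ⊗ₖ ρB) = unif c ⊗ₖ σ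

/-- An `A ↛ B'` semi-causal bipartite channel. -/
def SemiCausal {a b c b' : ℕ}
    (N : Matrix (Fin a × Fin b) (Fin a × Fin b) ℂ → Matrix (Fin c × Fin b') (Fin c × Fin b') ℂ) :
    Prop :=
  ∀ M : Matrix (Fin a) (Fin a) ℂ → Matrix (Fin a) (Fin a) ℂ, IsChannel M →
    ∀ X : Matrix (Fin a × Fin b) (Fin a × Fin b) ℂ,
      trA (N (tensorIdRight b M X)) = trA (N X)

/-- A locally balanced channel: a quantum channel that is both conditionally unital
and `A ↛ B'` semi-causal. -/
def LocallyBalanced {a b c b' : ℕ}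
    (N : Matrix (Fin a × Fin b) (Fin a × Fin b) ℂ → Matrix (Fin c × Fin b') (Fin c × Fin b') ℂ) :
    Prop :=
  IsChannel N ∧ CondUnital N ∧ SemiCausal N

/-- Conditional majorization `ρ ≻_A σ` with respect to the first system. -/
def CondMaj {a b a' b' : ℕ}
    (ρ : Matrix (Fin a × Fin b) (Fin a × Fin b) ℂ)
    (σ : Matrix (Fin a' × Fin b') (Fin a' × Fin b') ℂ) : Prop :=
  (a' ≥ a ∧ ∃ (V : Matrix (Fin a') (Fin a) ℂ)
      (N : Matrix (Fin a × Fin b) (Fin a × Fin b) ℂ →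
           Matrix (Fin a × Fin b') (Fin a × Fin b') ℂ),
      Vᴴ * V = 1 ∧ LocallyBalanced N ∧
      σ = (V ⊗ₖ (1 : Matrix (Fin b') (Fin b') ℂ)) * N ρ *
            (V ⊗ₖ (1 : Matrix (Fin b') (Fin b') ℂ))ᴴ) ∨
  (a ≥ a' ∧ ∃ (U : Matrix (Fin a) (Fin a') ℂ)
      (N : Matrix (Fin a × Fin b) (Fin a × Fin b) ℂ →
           Matrix (Fin a × Fin b') (Fin a × Fin b') ℂ),
      Uᴴ * U = 1 ∧ LocallyBalanced N ∧
      (U ⊗ₖ (1 : Matrix (Fin b') (Fin b') ℂ)) * σ *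
          (U ⊗ₖ (1 : Matrix (Fin b') (Fin b') ℂ))ᴴ = N ρ)

/-- Relaxed conditional majorization `ρ ≻^A σ`: as `CondMaj`, with the locally
balanced channel replaced by a mere conditionally unital channel. -/
def RelCondMaj {a b a' b' : ℕ}
    (ρ : Matrix (Fin a × Fin b) (Fin a × Fin b) ℂ)
    (σ : Matrix (Fin a' × Fin b') (Fin a' × Fin b') ℂ) : Prop :=
  (a' ≥ a ∧ ∃ (V : Matrix (Fin a') (Fin a) ℂ)
      (N : Matrix (Fin a × Fin b) (Fin a × Fin b) ℂ →
           Matrix (Fin a × Fin b') (Fin a × Fin b') ℂ),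
      Vᴴ * V = 1 ∧ (IsChannel N ∧ CondUnital N) ∧
      σ = (V ⊗ₖ (1 : Matrix (Fin b') (Fin b') ℂ)) * N ρ *
            (V ⊗ₖ (1 : Matrix (Fin b') (Fin b') ℂ))ᴴ) ∨
  (a ≥ a' ∧ ∃ (U : Matrix (Fin a) (Fin a') ℂ)
      (N : Matrix (Fin a × Fin b) (Fin a × Fin b) ℂ →
           Matrix (Fin a × Fin b') (Fin a × Fin b') ℂ),
      Uᴴ * U = 1 ∧ (IsChannel N ∧ CondUnital N) ∧
      (U ⊗ₖ (1 : Matrix (Fin b') (Fin b') ℂ)) * σ *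
          (U ⊗ₖ (1 : Matrix (Fin b') (Fin b') ℂ))ᴴ = N ρ)

/-- Reordering `(A × B) × (A' × B') ≃ AA' × BB'`. -/
def sysEquiv (a b a' b' : ℕ) :
    (Fin a × Fin b) × (Fin a' × Fin b') ≃ Fin (a * a') × Fin (b * b') :=
  (Equiv.prodProdProdComm (Fin a) (Fin b) (Fin a') (Fin b')).trans
    (finProdFinEquiv.prodCongr finProdFinEquiv)

/-- The tensor product `ρ_{AB} ⊗ σ_{A'B'}` regarded as a bipartite state with
first system `AA'` and second system `BB'`. -/
def tensorState {a b a' b' : ℕ}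
    (ρ : Matrix (Fin a × Fin b) (Fin a × Fin b) ℂ)
    (σ : Matrix (Fin a' × Fin b') (Fin a' × Fin b') ℂ) :
    Matrix (Fin (a * a') × Fin (b * b')) (Fin (a * a') × Fin (b * b')) ℂ :=
  Matrix.reindex (sysEquiv a b a' b') (sysEquiv a b a' b') (ρ ⊗ₖ σ)

/-- Reindexing of a matrix on a product of `Fin` types as a matrix on a single `Fin` type. -/
def mreindex {a b : ℕ} (ρ : Matrix (Fin a × Fin b) (Fin a × Fin b) ℂ) :
    Matrix (Fin (a * b)) (Fin (a * b)) ℂ :=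
  Matrix.reindex finProdFinEquiv finProdFinEquiv ρ

/-- Majorization `ρ ≻ σ` between states of possibly different dimensions. -/
def Maj {n n' : ℕ} (ρ : Matrix (Fin n) (Fin n) ℂ) (σ : Matrix (Fin n') (Fin n') ℂ) : Prop :=
  (n' ≥ n ∧ ∃ (V : Matrix (Fin n') (Fin n) ℂ)
      (N : Matrix (Fin n) (Fin n) ℂ → Matrix (Fin n) (Fin n) ℂ),
      Vᴴ * V = 1 ∧ IsChannel N ∧ N 1 = 1 ∧ σ = V * N ρ * Vᴴ) ∨
  (n ≥ n' ∧ ∃ (U : Matrix (Fin n) (Fin n') ℂ)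
      (N : Matrix (Fin n) (Fin n) ℂ → Matrix (Fin n) (Fin n) ℂ),
      Uᴴ * U = 1 ∧ IsChannel N ∧ N 1 = 1 ∧ U * σ * Uᴴ = N ρ)

/-- The conditional min-entropy
`H_min(A|B)_ρ = - log₂ min {λ ≥ 0 : λ I_A ⊗ ρ_B - ρ_{AB} ≽ 0}`. -/
def condMinEntropy {a b : ℕ} (ρ : Matrix (Fin a × Fin b) (Fin a × Fin b) ℂ) : ℝ :=
  - Real.logb 2 (sInf {l : ℝ | 0 ≤ l ∧
      (l • ((1 : Matrix (Fin a) (Fin a) ℂ) ⊗ₖ trA ρ) - ρ).PosSemidef})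

/-- The conditional min-entropy `H_min^↑(A|B)_ρ`, optimized over states `σ_B`. -/
def condMinEntropyUp {a b : ℕ} (ρ : Matrix (Fin a × Fin b) (Fin a × Fin b) ℂ) : ℝ :=
  sSup {r : ℝ | ∃ σ : Matrix (Fin b) (Fin b) ℂ, IsState σ ∧
    (∃ l : ℝ, 0 ≤ l ∧ (l • ((1 : Matrix (Fin a) (Fin a) ℂ) ⊗ₖ σ) - ρ).PosSemidef) ∧
    r = - Real.logb 2 (sInf {l : ℝ | 0 ≤ l ∧
      (l • ((1 : Matrix (Fin a) (Fin a) ℂ) ⊗ₖ σ) - ρ).PosSemidef})}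

/-- The maximally entangled state of rank `k` on `ℂ^k ⊗ ℂ^k`. -/
def maxEnt (k : ℕ) : Matrix (Fin k × Fin k) (Fin k × Fin k) ℂ :=
  Matrix.of fun p q => if p.1 = p.2 ∧ q.1 = q.2 then (k : ℂ)⁻¹ else 0

/-- The quantum channel on `m × m` matrices induced by a doubly stochastic matrix `D`,
`ρ ↦ ∑ x x', D x' x * ρ x x • E x' x'`. -/
def dsChannel {m : ℕ} (D : Matrix (Fin m) (Fin m) ℝ) :
    Matrix (Fin m) (Fin m) ℂ → Matrix (Fin m) (Fin m) ℂ :=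
  fun ρ => ∑ x : Fin m, ∑ x' : Fin m,
    (((D x' x : ℝ) : ℂ) * ρ x x) • Matrix.single x' x' (1 : ℂ)

/-- A doubly stochastic matrix: nonnegative entries, all row and column sums equal one. -/
def IsDoublyStochastic {m : ℕ} (D : Matrix (Fin m) (Fin m) ℝ) : Prop :=
  (∀ x x', 0 ≤ D x x') ∧ (∀ x, ∑ x', D x x' = 1) ∧ (∀ x', ∑ x, D x x' = 1)

/-- The tensor product `M ⊗ F` of two (linear) maps between matrix algebras. -/
def tensorMap {m m' n n' : ℕ}
    (M : Matrix (Fin m) (Fin m) ℂ → Matrix (Fin m') (Fin m') ℂ)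
    (F : Matrix (Fin n) (Fin n) ℂ → Matrix (Fin n') (Fin n') ℂ) :
    Matrix (Fin m × Fin n) (Fin m × Fin n) ℂ →
      Matrix (Fin m' × Fin n') (Fin m' × Fin n') ℂ :=
  fun X => ∑ k : Fin m, ∑ k' : Fin m, ∑ l : Fin n, ∑ l' : Fin n,
    X (k, l) (k', l') •
      (M (Matrix.single k k' 1) ⊗ₖ F (Matrix.single l l' 1))

/-- A conditional entropy: a real-valued function on all bipartite states of all finite
dimensions that is not identically zero, reverses conditional majorization, and is
additive on tensor products. -/
structure CondEntropy where
  H : ∀ (a b : ℕ), Matrix (Fin a × Fin b) (Fin a × Fin b) ℂ → ℝ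
  nontrivial : ∃ (a b : ℕ) (ρ : Matrix (Fin a × Fin b) (Fin a × Fin b) ℂ),
    IsState ρ ∧ H a b ρ ≠ 0
  mono : ∀ (a b a' b' : ℕ) (ρ : Matrix (Fin a × Fin b) (Fin a × Fin b) ℂ)
    (σ : Matrix (Fin a' × Fin b') (Fin a' × Fin b') ℂ),
    IsState ρ → IsState σ → CondMaj ρ σ → H a b ρ ≤ H a' b' σ
  additive : ∀ (a b a' b' : ℕ) (ρ : Matrix (Fin a × Fin b) (Fin a × Fin b) ℂ)
    (σ : Matrix (Fin a' × Fin b') (Fin a' × Fin b') ℂ),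
    IsState ρ → IsState σ →
    H (a * a') (b * b') (tensorState ρ σ) = H a b ρ + H a' b' σ

/-- A conditional entropy is normalized if `H(A|B) = 1` on `u⁽²⁾ ⊗ ρ_B`. -/
def CondEntropy.Normalized (E : CondEntropy) : Prop :=
  ∀ (b : ℕ) (ρB : Matrix (Fin b) (Fin b) ℂ), IsState ρB →
    E.H 2 b (unif 2 ⊗ₖ ρB) = 1

/-- A relaxed conditional entropy: as `CondEntropy`, but monotone under the relaxed
conditional majorization. -/
structure RelCondEntropy where
  H : ∀ (a b : ℕ), Matrix (Fin a × Fin b) (Fin a × Fin b) ℂ → ℝ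
  nontrivial : ∃ (a b : ℕ) (ρ : Matrix (Fin a × Fin b) (Fin a × Fin b) ℂ),
    IsState ρ ∧ H a b ρ ≠ 0
  mono : ∀ (a b a' b' : ℕ) (ρ : Matrix (Fin a × Fin b) (Fin a × Fin b) ℂ)
    (σ : Matrix (Fin a' × Fin b') (Fin a' × Fin b') ℂ),
    IsState ρ → IsState σ → RelCondMaj ρ σ → H a b ρ ≤ H a' b' σ
  additive : ∀ (a b a' b' : ℕ) (ρ : Matrix (Fin a × Fin b) (Fin a × Fin b) ℂ)
    (σ : Matrix (Fin a' × Fin b') (Fin a' × Fin b') ℂ),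
    IsState ρ → IsState σ →
    H (a * a') (b * b') (tensorState ρ σ) = H a b ρ + H a' b' σ

/-- A relaxed conditional entropy is normalized if `H(A|B) = 1` on `u⁽²⁾ ⊗ ρ_B`. -/
def RelCondEntropy.Normalized (E : RelCondEntropy) : Prop :=
  ∀ (b : ℕ) (ρB : Matrix (Fin b) (Fin b) ℂ), IsState ρB →
    E.H 2 b (unif 2 ⊗ₖ ρB) = 1

/-- An entropy: a real-valued function on all states of all finite dimensions that is
not identically zero, reverses majorization, and is additive on tensor products. -/
structure Entropy where
  H : ∀ (n : ℕ), Matrix (Fin n) (Fin n) ℂ → ℝ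
  nontrivial : ∃ (n : ℕ) (ρ : Matrix (Fin n) (Fin n) ℂ), IsState ρ ∧ H n ρ ≠ 0
  mono : ∀ (n n' : ℕ) (ρ : Matrix (Fin n) (Fin n) ℂ) (σ : Matrix (Fin n') (Fin n') ℂ),
    IsState ρ → IsState σ → Maj ρ σ → H n ρ ≤ H n' σ
  additive : ∀ (n n' : ℕ) (ρ : Matrix (Fin n) (Fin n) ℂ) (σ : Matrix (Fin n') (Fin n') ℂ),
    IsState ρ → IsState σ → H (n * n') (mreindex (ρ ⊗ₖ σ)) = H n ρ + H n' σ

/-- A relative entropy: an `[0,∞]`-valued function on pairs of states of equal dimension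
that is not identically zero, monotone under quantum channels, and additive on
tensor products. -/
structure RelEntropy where
  D : ∀ (n : ℕ), Matrix (Fin n) (Fin n) ℂ → Matrix (Fin n) (Fin n) ℂ → ℝ≥0∞
  nontrivial : ∃ (n : ℕ) (ρ σ : Matrix (Fin n) (Fin n) ℂ),
    IsState ρ ∧ IsState σ ∧ D n ρ σ ≠ 0
  mono : ∀ (n m : ℕ) (N : Matrix (Fin n) (Fin n) ℂ → Matrix (Fin m) (Fin m) ℂ),
    IsChannel N → ∀ ρ σ : Matrix (Fin n) (Fin n) ℂ,
      IsState ρ → IsState σ → D m (N ρ) (N σ) ≤ D n ρ σ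
  additive : ∀ (n m : ℕ) (ρ σ : Matrix (Fin n) (Fin n) ℂ) (ω τ : Matrix (Fin m) (Fin m) ℂ),
    IsState ρ → IsState σ → IsState ω → IsState τ →
    D (n * m) (mreindex (ρ ⊗ₖ ω)) (mreindex (σ ⊗ₖ τ)) = D n ρ σ + D m ω τ


/-- The conditional entropy `log₂|A| − 𝐃(ρ_{AB} ‖ u_A ⊗ ρ_B)` induced by a relative
entropy `𝐃`, valued in the extended reals. -/
def RelEntropy.condH (Dd : RelEntropy) (a b : ℕ)
    (ρ : Matrix (Fin a × Fin b) (Fin a × Fin b) ℂ) : EReal :=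
  ((Real.logb 2 a : ℝ) : EReal) -
    ((Dd.D (a * b) (mreindex ρ) (mreindex (unif a ⊗ₖ trA ρ)) : ℝ≥0∞) : EReal)

/-! The function `n ↦ 𝐇(u⁽ⁿ⁾)` turns products into sums and is monotone: for `d ≤ d'` and the
embedding `V : ℂᵈ → ℂᵈ'`, the completely depolarizing channel gives `u⁽ᵈ⁾ ≻ V u⁽ᵈ⁾ V† ≻ u⁽ᵈ'⁾`.
A monotone additive function on the positive integers with value `1` at `2` is `log₂`: with
`k = ⌊log₂ dⁿ⌋` we have `2ᵏ ≤ dⁿ < 2ᵏ⁺¹`, which pins `n f(d)` to `[k, k + 1]`; as `log₂` itself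
is such a function, `|f(d) - log₂ d| ≤ 1/n` for all `n`. -/

section MonotoneAdditive

variable {f : ℕ → ℝ}

theorem map_pow_of_map_mul (hmul : ∀ ⦃m n⦄, 1 ≤ m → 1 ≤ n → f (m * n) = f m + f n)
    {d : ℕ} (hd : 1 ≤ d) (n : ℕ) : f (d ^ n) = n * f d := by
  induction n with
  | zero => simpa using hmul le_rfl le_rfl
  | succ n ih =>
    rw [pow_succ, hmul (Nat.one_le_pow n d hd) hd, ih]
    push_cast
    ring

theorem natLog_le_mul_le_of_monotone_of_map_mul
    (hmono : ∀ ⦃m n⦄, 1 ≤ m → m ≤ n → f m ≤ f n)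
    (hmul : ∀ ⦃m n⦄, 1 ≤ m → 1 ≤ n → f (m * n) = f m + f n) (h2 : f 2 = 1)
    {d : ℕ} (hd : 1 ≤ d) (n : ℕ) :
    (Nat.log 2 (d ^ n) : ℝ) ≤ n * f d ∧ n * f d ≤ Nat.log 2 (d ^ n) + 1 := by
  set k := Nat.log 2 (d ^ n)
  have hpow : ∀ j : ℕ, f (2 ^ j) = j := fun j => by
    rw [map_pow_of_map_mul hmul one_le_two, h2, mul_one]
  have hdn : 1 ≤ d ^ n := Nat.one_le_pow n d hd
  have hlow : 2 ^ k ≤ d ^ n := Nat.pow_log_le_self 2 (by omega)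
  have hup : d ^ n ≤ 2 ^ (k + 1) := (Nat.lt_pow_succ_log_self one_lt_two _).le
  rw [← map_pow_of_map_mul hmul hd n]
  constructor
  · simpa only [hpow] using hmono Nat.one_le_two_pow hlow
  · simpa only [hpow, Nat.cast_succ] using hmono hdn hup

end MonotoneAdditive

theorem eq_of_monotone_of_map_mul {f g : ℕ → ℝ}
    (hf_mono : ∀ ⦃m n⦄, 1 ≤ m → m ≤ n → f m ≤ f n)
    (hf_mul : ∀ ⦃m n⦄, 1 ≤ m → 1 ≤ n → f (m * n) = f m + f n) (hf2 : f 2 = 1)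
    (hg_mono : ∀ ⦃m n⦄, 1 ≤ m → m ≤ n → g m ≤ g n)
    (hg_mul : ∀ ⦃m n⦄, 1 ≤ m → 1 ≤ n → g (m * n) = g m + g n) (hg2 : g 2 = 1)
    {d : ℕ} (hd : 1 ≤ d) : f d = g d := by
  have hclose : ∀ n : ℕ, n * |f d - g d| ≤ 1 := fun n => by
    obtain ⟨hf₁, hf₂⟩ := natLog_le_mul_le_of_monotone_of_map_mul hf_mono hf_mul hf2 hd n
    obtain ⟨hg₁, hg₂⟩ := natLog_le_mul_le_of_monotone_of_map_mul hg_mono hg_mul hg2 hd n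
    rw [← abs_of_nonneg (Nat.cast_nonneg (α := ℝ) n), ← abs_mul, abs_le]
    constructor <;> linarith
  refine eq_of_forall_dist_le fun ε hε => ?_
  obtain ⟨n, hn⟩ := exists_nat_gt ε⁻¹
  have hn_pos : (0 : ℝ) < n := (inv_pos.2 hε).trans hn
  rw [Real.dist_eq, ← mul_le_mul_iff_right₀ hn_pos]
  calc n * |f d - g d| ≤ 1 := hclose n
    _ ≤ n * ε := ((inv_lt_iff_one_lt_mul₀ hε).1 hn).le

theorem isState_unif {n : ℕ} (hn : 1 ≤ n) : IsState (unif n) := by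
  refine ⟨PosSemidef.one.smul (by positivity), ?_⟩
  rw [unif, trace_smul, trace_one, Fintype.card_fin, smul_eq_mul,
    inv_mul_cancel₀ (by exact_mod_cast (by omega : n ≠ 0))]

def depolarizing (n : ℕ) (X : Matrix (Fin n) (Fin n) ℂ) : Matrix (Fin n) (Fin n) ℂ :=
  X.trace • unif n

theorem choiMatrix_depolarizing (n : ℕ) : choiMatrix (depolarizing n) = (n : ℂ)⁻¹ • 1 := by
  ext ⟨i, k⟩ ⟨j, l⟩
  rcases eq_or_ne i j with rfl | h
  · simp [choiMatrix, depolarizing, unif, Matrix.sum_apply, Matrix.single, Matrix.trace,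
      Matrix.one_apply, ite_and]
  · simp [choiMatrix, depolarizing, unif, Matrix.sum_apply, Matrix.single, Matrix.trace,
      ite_and, h, h.symm]

theorem isChannel_depolarizing {n : ℕ} (hn : 1 ≤ n) : IsChannel (depolarizing n) := by
  refine ⟨⟨fun X Y => ?_, fun c X => ?_⟩, fun X => ?_, ?_⟩
  · simp [depolarizing, trace_add, add_smul]
  · simp [depolarizing, trace_smul, smul_smul]
  · rw [depolarizing, trace_smul, (isState_unif hn).2, smul_eq_mul, mul_one]
  · rw [choiMatrix_depolarizing]
    exact PosSemidef.one.smul (by positivity)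

theorem depolarizing_of_trace_eq_one {n : ℕ} {ρ : Matrix (Fin n) (Fin n) ℂ}
    (hρ : ρ.trace = 1) : depolarizing n ρ = unif n := by
  rw [depolarizing, hρ, one_smul]

theorem depolarizing_one {n : ℕ} (hn : 1 ≤ n) : depolarizing n 1 = 1 := by
  rw [depolarizing, unif, trace_one, Fintype.card_fin, smul_smul,
    mul_inv_cancel₀ (by exact_mod_cast (by omega : n ≠ 0)), one_smul]

theorem maj_unif {n : ℕ} (hn : 1 ≤ n) {ρ : Matrix (Fin n) (Fin n) ℂ} (hρ : ρ.trace = 1) :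
    Maj ρ (unif n) :=
  Or.inl ⟨le_rfl, 1, depolarizing n, by simp, isChannel_depolarizing hn, depolarizing_one hn,
    by simp [depolarizing_of_trace_eq_one hρ]⟩

def finEmbedding {d d' : ℕ} (h : d ≤ d') : Matrix (Fin d') (Fin d) ℂ :=
  (1 : Matrix (Fin d') (Fin d') ℂ).submatrix id (Fin.castLE h)

theorem conjTranspose_finEmbedding_mul_self {d d' : ℕ} (h : d ≤ d') :
    (finEmbedding h)ᴴ * finEmbedding h = 1 := by
  ext j j'
  simp [finEmbedding, Matrix.mul_apply, Matrix.one_apply, Fin.castLE_inj, eq_comm]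

theorem maj_unif_embedding {d d' : ℕ} (hd : 1 ≤ d) (h : d ≤ d') :
    Maj (unif d) (finEmbedding h * unif d * (finEmbedding h)ᴴ) :=
  Or.inl ⟨h, finEmbedding h, depolarizing d, conjTranspose_finEmbedding_mul_self h,
    isChannel_depolarizing hd, depolarizing_one hd, by rw [depolarizing_of_trace_eq_one (isState_unif hd).2]⟩

theorem mreindex_unif_kronecker (d e : ℕ) : mreindex (unif d ⊗ₖ unif e) = unif (d * e) := by
  rw [unif, unif, smul_kronecker, kronecker_smul, one_kronecker_one, smul_smul]
  simp only [mreindex, reindex_apply, submatrix_smul, Pi.smul_apply, submatrix_one_equiv, unif,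
    Nat.cast_mul, mul_inv]

namespace Entropy

variable (E : Entropy)

theorem H_unif_mono {d d' : ℕ} (hd : 1 ≤ d) (h : d ≤ d') :
    E.H d (unif d) ≤ E.H d' (unif d') := by
  set σ := finEmbedding h * unif d * (finEmbedding h)ᴴ
  have hσ : IsState σ := by
    refine ⟨(isState_unif hd).1.mul_mul_conjTranspose_same _, ?_⟩
    rw [trace_mul_cycle, conjTranspose_finEmbedding_mul_self, Matrix.one_mul, (isState_unif hd).2]
  calc E.H d (unif d) ≤ E.H d' σ :=
        E.mono _ _ _ _ (isState_unif hd) hσ (maj_unif_embedding hd h)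
    _ ≤ E.H d' (unif d') :=
        E.mono _ _ _ _ hσ (isState_unif (hd.trans h)) (maj_unif (hd.trans h) hσ.2)

theorem H_unif_mul {d e : ℕ} (hd : 1 ≤ d) (he : 1 ≤ e) :
    E.H (d * e) (unif (d * e)) = E.H d (unif d) + E.H e (unif e) := by
  rw [← E.additive d e _ _ (isState_unif hd) (isState_unif he), mreindex_unif_kronecker]

end Entropy

/-- Every normalized entropy takes the value `log₂ d` on the uniform state of
dimension `d`. -/
theorem entropy_unif_eq_logb (E : Entropy) (hnorm : E.H 2 (unif 2) = 1)
    (d : ℕ) (hd : 1 ≤ d) :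
    E.H d (unif d) = Real.logb 2 d :=
  eq_of_monotone_of_map_mul (fun _ _ => E.H_unif_mono) (fun _ _ => E.H_unif_mul) hnorm
    (fun _ _ hm h =>
      Real.logb_le_logb_of_le one_lt_two (by exact_mod_cast hm) (by exact_mod_cast h))
    (fun m n hm hn => by
      rw [Nat.cast_mul, Real.logb_mul (by exact_mod_cast (by omega : m ≠ 0))
        (by exact_mod_cast (by omega : n ≠ 0))])
    (by exact_mod_cast Real.logb_self_eq_one one_lt_two) hd
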